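/- Let p > 1 be a real number, N ≥ 0 an integer, and for each 0 ≤ i ≤ N let V_i be a finite-dimensional ℂ-vector space with an automorphism F_i all of whose eigenvalues have complex absolute value p^{i/2}. If ∑_{i=0}^{N} (−1)^i Tr(F_i^a | V_i) = 0 for every integer a ≥ 1, then V_i = 0 for all i. -/

import Mathlib

/-!
Decompose each `V i` into generalized eigenspaces of `F i`: then
`Tr (F i ^ a) = ∑ μ, dim V_{i,μ} • μ ^ a`, so the hypothesis says that the function
`a ↦ ∑ μ c μ • μ ^ a`, with `c μ = ∑ i, (-1) ^ i • dim V_{i,μ}`, vanishes for `a ≥ 1`. The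
exponentials `a ↦ μ ^ a` of distinct nonzero `μ` are linearly independent (Vandermonde), so every
`c μ` vanishes. Since the eigenvalues of different `F i` have different absolute values, each
`c μ` has at most one nonzero summand, hence all generalized eigenspaces, and so all `V i`,
are zero.
-/

open Module LinearMap Finset

theorem Finset.eq_zero_of_forall_sum_mul_pow_succ_eq_zero {R : Type*} [CommRing R] [IsDomain R]
    {s : Finset R} (hs : 0 ∉ s) {c : R → R} (h : ∀ a : ℕ, ∑ μ ∈ s, c μ * μ ^ (a + 1) = 0) :
    ∀ μ ∈ s, c μ = 0 := by
  set e := s.equivFin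
  have hv : (fun i ↦ c (e.symm i) * e.symm i) = 0 :=
    Matrix.eq_zero_of_forall_pow_sum_mul_pow_eq_zero (f := fun i ↦ (e.symm i : R))
      (Subtype.val_injective.comp e.symm.injective) fun a ↦ by
        rw [← h a, ← s.sum_coe_sort, ← e.symm.sum_comp]
        simp only [pow_succ', mul_assoc]
  intro μ hμ
  simpa [e, ne_of_mem_of_not_mem hμ hs] using congr_fun hv (e ⟨μ, hμ⟩)

theorem LinearEquiv.toLinearMap_pow {R M : Type*} [Semiring R] [AddCommMonoid M] [Module R M]
    (e : M ≃ₗ[R] M) (n : ℕ) : ((e ^ n : M ≃ₗ[R] M) : Module.End R M) = (e : Module.End R M) ^ n :=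
  map_pow automorphismGroup.toLinearMapMonoidHom e n

theorem LinearMap.trace_pow_eq_of_isNilpotent_sub_algebraMap {R M : Type*} [CommRing R]
    [IsReduced R] [AddCommGroup M] [Module R M] [Module.Free R M] [Module.Finite R M]
    {f : Module.End R M} {μ : R} (hf : IsNilpotent (f - algebraMap R _ μ)) (a : ℕ) :
    trace R M (f ^ a) = μ ^ a * finrank R M := by
  induction a with
  | zero => simp
  | succ a ih =>
    rw [pow_succ, Module.End.mul_eq_comp,
      trace_comp_eq_mul_of_commute_of_isNilpotent μ ((Commute.refl f).pow_left a) hf, ih, pow_succ]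
    ring

namespace Module.End

theorem maxGenEigenspace_eq_bot_iff {R M : Type*} [CommRing R] [AddCommGroup M]
    [Module R M] {f : End R M} {μ : R} : f.maxGenEigenspace μ = ⊥ ↔ ¬ f.HasEigenvalue μ :=
  ⟨fun h hμ ↦ hasEigenvalue_iff.mp hμ (eq_bot_mono eigenspace_le_maxGenEigenspace h),
    fun hμ ↦ not_not.mp fun h ↦ hμ (HasUnifEigenvalue.lt zero_lt_one h)⟩

variable {K V : Type*} [Field K] [AddCommGroup V] [Module K V] [FiniteDimensional K V]

theorem trace_restrict_pow_maxGenEigenspace (f : End K V) (μ : K) (a : ℕ) :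
    trace K _ ((f ^ a).restrict
      (f.mapsTo_maxGenEigenspace_of_comm ((Commute.refl f).pow_right a) μ)) =
      μ ^ a * finrank K (f.maxGenEigenspace μ) := by
  have hf := f.mapsTo_maxGenEigenspace_of_comm (Commute.refl f) μ
  rw [← pow_restrict a hf]
  refine trace_pow_eq_of_isNilpotent_sub_algebraMap ?_ a
  convert f.isNilpotent_restrict_maxGenEigenspace_sub_algebraMap μ
  ext
  rfl

theorem trace_pow_eq_sum_finrank_maxGenEigenspace [IsAlgClosed K] (f : End K V) {s : Finset K}
    (hs : ∀ μ, f.HasEigenvalue μ → μ ∈ s) (a : ℕ) :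
    trace K V (f ^ a) = ∑ μ ∈ s, (finrank K (f.maxGenEigenspace μ) : K) * μ ^ a := by
  classical
  have hint : DirectSum.IsInternal f.maxGenEigenspace :=
    DirectSum.isInternal_submodule_of_iSupIndep_of_iSup_eq_top f.independent_maxGenEigenspace
      f.iSup_maxGenEigenspace_eq_top
  have hfin := WellFoundedGT.finite_ne_bot_of_iSupIndep f.independent_maxGenEigenspace
  rw [trace_eq_sum_trace_restrict' hint hfin
    (fun μ ↦ f.mapsTo_maxGenEigenspace_of_comm ((Commute.refl f).pow_right a) μ)]
  refine (Finset.sum_congr rfl fun μ _ ↦ ?_).trans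
    (Finset.sum_subset (fun μ hμ ↦ hs μ ?_) (fun μ _ hμ ↦ ?_))
  · rw [trace_restrict_pow_maxGenEigenspace, mul_comm]
  · exact HasUnifEigenvalue.lt zero_lt_one ((Set.Finite.mem_toFinset hfin).mp hμ)
  · rw [Set.Finite.mem_toFinset, Set.mem_ofPred_eq, not_not] at hμ
    rw [hμ, finrank_bot, Nat.cast_zero, zero_mul]

theorem subsingleton_of_sum_mul_trace_pow_eq_zero {ι K : Type*} [Fintype ι] [Field K]
    [CharZero K] [IsAlgClosed K] {V : ι → Type*} [∀ i, AddCommGroup (V i)] [∀ i, Module K (V i)]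
    [∀ i, FiniteDimensional K (V i)] (f : ∀ i, End K (V i)) {ε : ι → K} (hε : ∀ i, ε i ≠ 0)
    (h0 : ∀ i, ¬ (f i).HasEigenvalue 0)
    (hdisj : ∀ i j μ, (f i).HasEigenvalue μ → (f j).HasEigenvalue μ → i = j)
    (h : ∀ a : ℕ, ∑ i, ε i * trace K (V i) (f i ^ (a + 1)) = 0) (i : ι) : Subsingleton (V i) := by
  classical
  let T : Finset K := univ.biUnion fun i ↦ (f i).finite_hasEigenvalue.toFinset
  have hT (i) (μ) (hμ : (f i).HasEigenvalue μ) : μ ∈ T :=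
    mem_biUnion.2 ⟨i, mem_univ i, (Set.Finite.mem_toFinset _).2 hμ⟩
  have hT0 : (0 : K) ∉ T := by simpa [T] using h0
  have hc : ∀ μ ∈ T, ∑ j, ε j * (finrank K ((f j).maxGenEigenspace μ) : K) = 0 :=
    T.eq_zero_of_forall_sum_mul_pow_succ_eq_zero hT0 fun a ↦ by
      rw [← h a]
      simp only [sum_mul, (f _).trace_pow_eq_sum_finrank_maxGenEigenspace (hT _), mul_sum,
        mul_assoc]
      exact sum_comm
  by_contra hV
  rw [not_subsingleton_iff_nontrivial] at hV
  obtain ⟨μ, hμ⟩ := (f i).exists_eigenvalue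
  have hcμ := hc μ (hT i μ hμ)
  rw [sum_eq_single i (fun j _ hji ↦ ?_) (absurd (mem_univ i))] at hcμ
  · have hrank : finrank K ((f i).maxGenEigenspace μ) ≠ 0 :=
      Submodule.finrank_eq_zero.not.2 (maxGenEigenspace_eq_bot_iff.not.2 (not_not.2 hμ))
    simp [hε i, hrank] at hcμ
  · rw [maxGenEigenspace_eq_bot_iff.2 fun hj ↦ hji (hdisj j i μ hj hμ), finrank_bot, Nat.cast_zero,
      mul_zero]

end Module.End

/-- Purity: if `F_i` is an automorphism of a finite-dimensional ℂ-vector space `V i` all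
of whose eigenvalues have absolute value `p^{i/2}` (with `p > 1`), and the alternating sum
of traces of `F_i^a` vanishes for all `a ≥ 1`, then all `V i` vanish. -/
theorem stmt_13 (p : ℝ) (hp : 1 < p) (N : ℕ) (V : Fin (N + 1) → Type*)
    [∀ i, AddCommGroup (V i)] [∀ i, Module ℂ (V i)] [∀ i, FiniteDimensional ℂ (V i)]
    (F : ∀ i, V i ≃ₗ[ℂ] V i)
    (hF : ∀ i : Fin (N + 1), ∀ μ : ℂ, Module.End.HasEigenvalue ((F i).toLinearMap) μ →
      ‖μ‖ = p ^ (((i : ℕ) : ℝ) / 2))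
    (h : ∀ a : ℕ, 1 ≤ a →
      (∑ i : Fin (N + 1), (-1 : ℂ) ^ (i : ℕ) * LinearMap.trace ℂ (V i) ((F i ^ a).toLinearMap)) = 0) :
    ∀ i, Subsingleton (V i) := by
  refine Module.End.subsingleton_of_sum_mul_trace_pow_eq_zero (fun i ↦ (F i).toLinearMap)
    (ε := fun i ↦ (-1) ^ (i : ℕ)) (fun _ ↦ pow_ne_zero _ (neg_ne_zero.2 one_ne_zero))
    (fun i h0 ↦ ?_) (fun i j μ hi hj ↦ ?_) fun a ↦ ?_
  · exact Module.End.hasEigenvalue_iff.1 h0 ((Module.End.eigenspace_zero _).trans (F i).ker)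
  · have hnorm := (hF i μ hi).symm.trans (hF j μ hj)
    rw [Real.rpow_right_inj (by linarith) hp.ne'] at hnorm
    exact Fin.ext (by exact_mod_cast (div_left_inj' two_ne_zero).mp hnorm)
  · simpa only [LinearEquiv.toLinearMap_pow] using h (a + 1) (Nat.le_add_left 1 a)
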